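/- arXiv:2605.03829 — 2 statements merged into one kernel-verified Lean document; each statement's English description precedes it below -/
import Mathlib

section
/- Let 0 ≤ c₁ < 1/2. For every ω ≥ √(4/(1-c₁)), e^{-(1-c₁)ω²/4} ∫₀^ω e^{(1-c₁)t²/4} dt ≤ 4/((1-c₁)ω) ≤ 8/ω. -/
open Real intervalIntegral

theorem gaussian_type_integral_le_large (c₁ : ℝ) (hc₁ : 0 ≤ c₁) (hc₁' : c₁ < 1/2)
    (ω : ℝ) (hω : Real.sqrt (4 / (1 - c₁)) ≤ ω) :
    Real.exp (-(1 - c₁) * ω ^ 2 / 4) * (∫ t in (0:ℝ)..ω, Real.exp ((1 - c₁) * t ^ 2 / 4))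
      ≤ 4 / ((1 - c₁) * ω) ∧ 4 / ((1 - c₁) * ω) ≤ 8 / ω := by
  have ha2 : 1/2 < 1 - c₁ := by linarith
  have ha0 : (0:ℝ) < 1 - c₁ := by linarith
  have hω0 : 0 < ω :=
    lt_of_lt_of_le (Real.sqrt_pos.mpr (by positivity)) hω
  set a : ℝ := 1 - c₁ with ha
  have hk : (0:ℝ) < a * ω / 4 := by positivity
  constructor
  · -- pointwise bound exp(a t²/4) ≤ exp(a ω t /4) on [0, ω]
    have hmono : (∫ t in (0:ℝ)..ω, Real.exp (a * t ^ 2 / 4))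
        ≤ ∫ t in (0:ℝ)..ω, Real.exp (a * ω / 4 * t) := by
      apply intervalIntegral.integral_mono_on hω0.le
      · exact (Continuous.intervalIntegrable (by continuity) _ _)
      · exact (Continuous.intervalIntegrable (by continuity) _ _)
      · intro t ht
        rw [Set.mem_Icc] at ht
        apply Real.exp_le_exp.mpr
        nlinarith [mul_nonneg (mul_nonneg ha0.le ht.1) (sub_nonneg.mpr ht.2)]
    have hcomp : (∫ t in (0:ℝ)..ω, Real.exp (a * ω / 4 * t))
        = (a * ω / 4)⁻¹ * (Real.exp (a * ω ^ 2 / 4) - 1) := by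
      rw [intervalIntegral.integral_comp_mul_left Real.exp (ne_of_gt hk)]
      rw [integral_exp]
      simp only [mul_zero, Real.exp_zero, smul_eq_mul]
      ring_nf
    have hE : (1:ℝ) ≤ Real.exp (a * ω ^ 2 / 4) := by
      rw [show (1:ℝ) = Real.exp 0 by simp]
      exact Real.exp_le_exp.mpr (by positivity)
    have hineq : (∫ t in (0:ℝ)..ω, Real.exp (a * t ^ 2 / 4))
        ≤ 4 / (a * ω) * Real.exp (a * ω ^ 2 / 4) := by
      rw [hcomp] at hmono
      have : (a * ω / 4)⁻¹ = 4 / (a * ω) := by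
        field_simp
      rw [this] at hmono
      have h4 : (0:ℝ) < 4 / (a * ω) := by positivity
      nlinarith
    have hexp : Real.exp (-a * ω ^ 2 / 4) * Real.exp (a * ω ^ 2 / 4) = 1 := by
      rw [← Real.exp_add]; ring_nf; exact Real.exp_zero
    calc Real.exp (-a * ω ^ 2 / 4) * (∫ t in (0:ℝ)..ω, Real.exp (a * t ^ 2 / 4))
        ≤ Real.exp (-a * ω ^ 2 / 4) * (4 / (a * ω) * Real.exp (a * ω ^ 2 / 4)) := by
          exact mul_le_mul_of_nonneg_left hineq (Real.exp_pos _).le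
      _ = 4 / (a * ω) * (Real.exp (-a * ω ^ 2 / 4) * Real.exp (a * ω ^ 2 / 4)) := by ring
      _ = 4 / (a * ω) := by rw [hexp, mul_one]
  · rw [div_le_div_iff₀ (by positivity) hω0]
    nlinarith
end

section
/- Let (aₙ)_{n≥0} be nonnegative reals with a₀ = 1, a₁ = 0, and suppose aₙ₊₁/((n+1)!(2λ)^{n+1}) ≤ (γ/(n+1)) Σ_{k=1}^n a_{n-k}/((n-k)!(2λ)^{n-k}) for all n ≥ 1, where λ > 0 and γ ≥ 1. Then aₙ ≤ ((2λ)√γ)ⁿ n! for all n. -/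
theorem recursive_factorial_bound
    (a : ℕ → ℝ) (ha : ∀ n, 0 ≤ a n) (h0 : a 0 = 1) (h1 : a 1 = 0)
    (lam gam : ℝ) (hlam : 0 < lam) (hgam : 1 ≤ gam)
    (hrec : ∀ n : ℕ, 1 ≤ n →
      a (n + 1) / (((n + 1).factorial : ℝ) * (2 * lam) ^ (n + 1)) ≤
        (gam / (n + 1)) *
          ∑ k ∈ Finset.Icc 1 n, a (n - k) / (((n - k).factorial : ℝ) * (2 * lam) ^ (n - k))) :
    ∀ n : ℕ, a n ≤ ((2 * lam) * Real.sqrt gam) ^ n * (n.factorial : ℝ) := by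
  have hgam0 : (0:ℝ) ≤ gam := le_trans zero_le_one hgam
  set s := Real.sqrt gam with hs
  have hs1 : 1 ≤ s := by
    rw [hs, show (1:ℝ) = Real.sqrt 1 by simp]
    exact Real.sqrt_le_sqrt hgam
  have hs0 : 0 ≤ s := le_trans zero_le_one hs1
  have hs2 : s ^ 2 = gam := Real.sq_sqrt hgam0
  have hden : ∀ n : ℕ, (0:ℝ) < (n.factorial : ℝ) * (2*lam)^n := by
    intro n
    have : (0:ℝ) < (n.factorial : ℝ) := by exact_mod_cast n.factorial_pos
    positivity
  have key : ∀ n : ℕ, a n / ((n.factorial:ℝ) * (2*lam)^n) ≤ s ^ n := by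
    intro n
    induction n using Nat.strong_induction_on with
    | _ n ih =>
      match n with
      | 0 => simp [h0]
      | 1 => simp [h1]; positivity
      | (m+2) =>
        have h := hrec (m+1) (by omega)
        have hsum : ∑ k ∈ Finset.Icc 1 (m+1),
            a ((m+1)-k) / ((((m+1)-k).factorial:ℝ) * (2*lam)^((m+1)-k))
            ≤ (m+1 : ℝ) * s ^ m := by
          calc _ ≤ ∑ k ∈ Finset.Icc 1 (m+1), s ^ m := by
                apply Finset.sum_le_sum
                intro k hk
                simp only [Finset.mem_Icc] at hk
                have hlt : (m+1) - k < m+2 := by omega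
                exact (ih ((m+1)-k) hlt).trans
                  (pow_le_pow_right₀ hs1 (by omega))
            _ = (m+1:ℝ) * s ^ m := by
                rw [Finset.sum_const, Nat.card_Icc]
                simp
        have h2 : a (m+2) / (((m+2).factorial:ℝ) * (2*lam)^(m+2)) ≤
            (gam / (m+1+1)) * ((m+1:ℝ) * s ^ m) := by
          push_cast at h ⊢
          refine h.trans ?_
          apply mul_le_mul_of_nonneg_left hsum
          positivity
        refine h2.trans ?_
        have hfrac : (m+1:ℝ) / (m+2:ℝ) ≤ 1 := by
          rw [div_le_one (by positivity)]; linarith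
        have : (gam / (m+1+1)) * ((m+1:ℝ) * s ^ m)
            = s ^ (m+2) * ((m+1:ℝ) / (m+2:ℝ)) := by
          rw [← hs2]; push_cast; ring
        rw [this]
        calc s ^ (m+2) * ((m+1:ℝ) / (m+2:ℝ)) ≤ s ^ (m+2) * 1 :=
              mul_le_mul_of_nonneg_left hfrac (by positivity)
          _ = s ^ (m+2) := mul_one _
  intro n
  have := key n
  rw [div_le_iff₀ (hden n)] at this
  calc a n ≤ s ^ n * ((n.factorial:ℝ) * (2*lam)^n) := this
    _ = ((2*lam) * s) ^ n * (n.factorial:ℝ) := by rw [mul_pow]; ring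
end
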